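/- The q-Stirling number of the first kind evaluated at q = −1 satisfies c_q[n,k]|_{q=−1} = binom(⌊n/2⌋, n−k). -/
import Mathlib


open scoped Classical
open Polynomial

/-- Rook placements of `n` rooks, no two in the same column, on the staircase board of
length `m` (column `c`, indexed from the left starting at `0`, has `m - 1 - c` squares).
`f c = 0` means column `c` is empty, and `f c = b + 1` means column `c` carries a rook
with `b` squares below it. -/
def Rooks (m n : ℕ) : Finset (Fin (m - 1) → Fin m) :=
  Finset.univ.filter fun f =>
    (∀ c, (f c : ℕ) ≤ m - 1 - (c : ℕ)) ∧
    (Finset.univ.filter fun c => (f c : ℕ) ≠ 0).card = n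

/-- The total number of squares strictly below the rooks of the placement `f`. -/
def rbelow {m : ℕ} (f : Fin (m - 1) → Fin m) : ℕ := ∑ c, ((f c : ℕ) - 1)

/-- The (unsigned) `q`-Stirling numbers of the first kind:
`c_q[n,k] = c_q[n-1,k-1] + [n-1]_q ⬝ c_q[n-1,k]`, `c_q[n,0] = δ_{n,0}`. -/
noncomputable def cq : ℕ → ℕ → Polynomial ℤ
  | 0, 0 => 1
  | 0, _ + 1 => 0
  | _ + 1, 0 => 0
  | n + 1, k + 1 => cq n k + (∑ i ∈ Finset.range n, X ^ i) * cq n (k + 1)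

lemma cq_eq_zero : ∀ n k, n < k → cq n k = 0
  | 0, _ + 1, _ => by simp [cq]
  | n + 1, k + 1, h => by
    rw [cq, cq_eq_zero n k (by omega), cq_eq_zero n (k + 1) (by omega)]
    ring

theorem cq_eval_neg_one (n k : ℕ) (hk : k ≤ n) :
    (cq n k).eval (-1) = ((n / 2).choose (n - k) : ℤ) := by
  induction n generalizing k with
  | zero => interval_cases k <;> simp [cq]
  | succ n ih =>
    match k with
    | 0 =>
      have : (n + 1) / 2 < n + 1 := Nat.div_lt_self (by omega) (by omega)
      simp [cq, Nat.choose_eq_zero_of_lt this]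
    | k + 1 =>
      have hk' : k ≤ n := by omega
      rw [cq]
      simp only [eval_add, eval_mul]
      rcases eq_or_lt_of_le hk' with rfl | hlt
      · rw [cq_eq_zero k (k + 1) (by omega)]
        simp [ih k le_rfl]
      · have hgeo : (∑ i ∈ Finset.range n, (X : Polynomial ℤ) ^ i).eval (-1)
            = if Even n then 0 else 1 := by
          simp [eval_finset_sum, neg_one_geom_sum]
        rw [ih k hk', ih (k + 1) (by omega), hgeo]
        rcases Nat.even_or_odd n with he | ho
        · have he' := he; rw [Nat.even_iff] at he'
          have h2 : (n + 1) / 2 = n / 2 := by omega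
          have h3 : n + 1 - (k + 1) = n - k := by omega
          simp [he, h2, h3]
        · have ho' := ho; rw [Nat.odd_iff] at ho'
          have h2 : (n + 1) / 2 = n / 2 + 1 := by omega
          have h3 : n + 1 - (k + 1) = (n - (k + 1)) + 1 := by omega
          rw [if_neg (by simpa using ho), h2, h3, Nat.choose_succ_succ]
          have : n - k = n - (k + 1) + 1 := by omega
          rw [this]
          push_cast
          ring
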